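/- arXiv:2601.02499 — 3 statements merged into one kernel-verified Lean document; each statement's English description precedes it below -/
import Mathlib

section
/- Let (X, 𝒜, μ) be a probability space and let p : X → [0, ∞) be measurable with ∫ p dμ = 1 and p > 0 μ-almost everywhere. Let ν be the probability measure with density p with respect to μ. Then ∫ max(log(1/p(x)), 0)⁴ dν(x) ≤ 24. -/
/-! With `u = log (1 / p) ≥ 0` one has `p * u ^ 4 = u ^ 4 * exp (-u) ≤ 4! = 24`, because
`exp u ≥ u ^ 4 / 4!`. Since `ν = p • μ`, integrating the pointwise bound
`p * max (log (1 / p)) 0 ^ 4 ≤ 24` against the probability measure `μ` gives the claim. -/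

open MeasureTheory

theorem Real.mul_max_log_inv_pow_le_factorial {t : ℝ} (ht : 0 ≤ t) {n : ℕ} (hn : n ≠ 0) :
    t * max (Real.log t⁻¹) 0 ^ n ≤ n.factorial := by
  rcases ht.eq_or_lt with rfl | ht
  · simp
  rcases le_total (Real.log t⁻¹) 0 with hu | hu
  · rw [max_eq_right hu, zero_pow hn, mul_zero]
    positivity
  have h := Real.pow_div_factorial_le_exp _ hu n
  rw [div_le_iff₀ (by positivity), ← div_le_iff₀' (Real.exp_pos _),
    Real.exp_log (inv_pos.2 ht), div_inv_eq_mul] at h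
  rwa [max_eq_left hu, mul_comm]

theorem norm_integral_withDensity_ofReal_le {X E : Type*} [MeasurableSpace X]
    [NormedAddCommGroup E] [NormedSpace ℝ E] {μ : Measure X} [IsFiniteMeasure μ]
    {p : X → ℝ} (hp : Measurable p) {g : X → E} {C : ℝ} (hC : 0 ≤ C)
    (hpg : ∀ x, 0 ≤ p x → p x * ‖g x‖ ≤ C) :
    ‖∫ x, g x ∂μ.withDensity fun x => ENNReal.ofReal (p x)‖ ≤ C * μ.real Set.univ := by
  have hpointwise : ∀ x, ENNReal.ofReal (p x) * ENNReal.ofReal ‖g x‖ ≤ ENNReal.ofReal C := by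
    intro x
    rcases le_total 0 (p x) with hx | hx
    · rw [← ENNReal.ofReal_mul hx]
      exact ENNReal.ofReal_le_ofReal (hpg x hx)
    · simp [ENNReal.ofReal_of_nonpos hx]
  calc ‖∫ x, g x ∂μ.withDensity fun x => ENNReal.ofReal (p x)‖
      ≤ (∫⁻ x, ENNReal.ofReal ‖g x‖ ∂μ.withDensity fun x => ENNReal.ofReal (p x)).toReal :=
        norm_integral_le_lintegral_norm g
    _ ≤ (∫⁻ _, ENNReal.ofReal C ∂μ).toReal := by
        refine ENNReal.toReal_mono (by simp [ENNReal.mul_eq_top]) ?_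
        exact (lintegral_withDensity_le_lintegral_mul μ hp.ennreal_ofReal _).trans
          (lintegral_mono hpointwise)
    _ = C * μ.real Set.univ := by
        simp [ENNReal.toReal_ofReal hC, Measure.real]

theorem fourth_log_moment_le_general {X : Type*} [MeasurableSpace X]
    (μ : Measure X) [IsProbabilityMeasure μ]
    (p : X → ℝ) (hp_meas : Measurable p) :
    ∫ x, max (Real.log (1 / p x)) 0 ^ 4
        ∂(μ.withDensity fun x => ENNReal.ofReal (p x)) ≤ 24 := by
  have hbound : ∀ x, 0 ≤ p x → p x * ‖max (Real.log (1 / p x)) 0 ^ 4‖ ≤ 24 := fun x hx => by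
    rw [one_div, Real.norm_of_nonneg (by positivity)]
    exact_mod_cast Real.mul_max_log_inv_pow_le_factorial hx four_ne_zero
  calc _ ≤ ‖∫ x, max (Real.log (1 / p x)) 0 ^ 4
          ∂(μ.withDensity fun x => ENNReal.ofReal (p x))‖ := Real.le_norm_self _
    _ ≤ 24 * μ.real Set.univ := norm_integral_withDensity_ofReal_le hp_meas (by norm_num) hbound
    _ = 24 := by simp

/-- Chebyshev/layer-cake estimate: if `p` is a probability density w.r.t. the probability
measure `μ` and `ν = p·μ`, then `∫ max(log(1/p), 0)⁴ dν ≤ 24`. -/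
theorem fourth_log_moment_le {X : Type*} [MeasurableSpace X]
    (μ : Measure X) [IsProbabilityMeasure μ]
    (p : X → ℝ) (hp_meas : Measurable p) (hp_nonneg : ∀ x, 0 ≤ p x)
    (hp_int : ∫ x, p x ∂μ = 1) (hp_pos : ∀ᵐ x ∂μ, 0 < p x) :
    ∫ x, max (Real.log (1 / p x)) 0 ^ 4
        ∂(μ.withDensity fun x => ENNReal.ofReal (p x)) ≤ 24 :=
  fourth_log_moment_le_general μ p hp_meas
end

section
/- Let (X, 𝒜, μ) be a measure space and let f, g : X → [0, ∞) be measurable with ∫ f dμ = ∫ g dμ = 1 and f > 0 μ-almost everywhere. If there exists ε with 0 ≤ ε ≤ 1/2 such that |g(x)/f(x) − 1| ≤ ε for μ-almost every x, then the Kullback–Leibler divergence satisfies ∫ f · log(f/g) dμ ≤ 2ε². -/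
/-!
Writing `r = g / f`, the elementary inequality `-log r ≤ (1 - r) + 2 (1 - r)²` for `r ≥ 1/2`
gives pointwise `f log (f / g) ≤ (f - g) + 2 ε² f`. Since `f` and `g` have the same mass, the
first-order term `f - g` integrates to `0` and the right-hand side to `2 ε²`.
-/

open MeasureTheory

/-- From `-log r ≤ 1/r - 1 = (1 - r) + (1 - r)² / r`. -/
theorem Real.neg_log_le_one_sub_add_two_mul_sq {r : ℝ} (hr : 1 / 2 ≤ r) :
    -Real.log r ≤ (1 - r) + 2 * (1 - r) ^ 2 := by
  have hr0 : 0 < r := by linarith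
  have hlog : -Real.log r ≤ r⁻¹ - 1 := by
    simpa only [Real.log_inv] using Real.log_le_sub_one_of_pos (inv_pos.2 hr0)
  have hsplit : r⁻¹ - 1 = (1 - r) + (1 - r) ^ 2 / r := by field_simp; ring
  have hquad : (1 - r) ^ 2 / r ≤ 2 * (1 - r) ^ 2 := by
    rw [div_le_iff₀ hr0]; nlinarith [sq_nonneg (1 - r)]
  linarith

theorem Real.mul_log_div_le_of_abs_div_sub_one_le {a b ε : ℝ} (ha : 0 < a)
    (hε : ε ≤ 1 / 2) (hab : |b / a - 1| ≤ ε) :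
    a * Real.log (a / b) ≤ (a - b) + 2 * ε ^ 2 * a := by
  set r := b / a with hr
  have hb : a * r = b := by rw [hr]; field_simp
  have hr_half : 1 / 2 ≤ r := by linarith [(abs_le.1 hab).1]
  have hlog : Real.log (a / b) = -Real.log r := by rw [hr, ← Real.log_inv, inv_div]
  have hsq : (1 - r) ^ 2 ≤ ε ^ 2 := by
    rw [← sq_abs, abs_sub_comm]; exact pow_le_pow_left₀ (abs_nonneg _) hab 2
  rw [hlog]
  nlinarith [mul_le_mul_of_nonneg_left (Real.neg_log_le_one_sub_add_two_mul_sq hr_half) ha.le]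

/-- A non-integrable `F` has Bochner integral `0 ≤ ∫ G`. -/
theorem MeasureTheory.integral_le_integral_of_ae_le_of_integral_nonneg {X : Type*}
    [MeasurableSpace X] {μ : Measure X} {F G : X → ℝ} (hG : Integrable G μ)
    (hG0 : 0 ≤ ∫ x, G x ∂μ) (hFG : F ≤ᵐ[μ] G) :
    ∫ x, F x ∂μ ≤ ∫ x, G x ∂μ := by
  by_cases hF : Integrable F μ
  · exact integral_mono_ae hF hG hFG
  · rwa [integral_undef hF]

theorem kl_le_of_ratio_close_general {X : Type*} [MeasurableSpace X]
    (μ : Measure X) (f g : X → ℝ)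
    (hf_int : ∫ x, f x ∂μ = 1) (hg_int : ∫ x, g x ∂μ = 1)
    (hf_pos : ∀ᵐ x ∂μ, 0 < f x)
    (ε : ℝ) (hε : ε ≤ 1 / 2)
    (hratio : ∀ᵐ x ∂μ, |g x / f x - 1| ≤ ε) :
    ∫ x, f x * Real.log (f x / g x) ∂μ ≤ 2 * ε ^ 2 := by
  have hf : Integrable f μ := .of_integral_ne_zero (by simp [hf_int])
  have hg : Integrable g μ := .of_integral_ne_zero (by simp [hg_int])
  have hbound : ∀ᵐ x ∂μ, f x * Real.log (f x / g x) ≤ (f x - g x) + 2 * ε ^ 2 * f x := by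
    filter_upwards [hf_pos, hratio] with x hfx hx
    exact Real.mul_log_div_le_of_abs_div_sub_one_le hfx hε hx
  have hrhs : ∫ x, ((f x - g x) + 2 * ε ^ 2 * f x) ∂μ = 2 * ε ^ 2 := by
    rw [integral_add (f := fun x => f x - g x) (hf.sub hg) (hf.const_mul _), integral_sub hf hg, integral_const_mul,
      hf_int, hg_int]
    ring
  calc ∫ x, f x * Real.log (f x / g x) ∂μ
      ≤ ∫ x, ((f x - g x) + 2 * ε ^ 2 * f x) ∂μ :=
        integral_le_integral_of_ae_le_of_integral_nonneg ((hf.sub hg).add (hf.const_mul _))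
          (by rw [hrhs]; positivity) hbound
    _ = 2 * ε ^ 2 := hrhs

/-- One-step KL bound from a uniform density-ratio estimate: if `f, g` are probability
densities and `|g/f − 1| ≤ ε ≤ 1/2` a.e., then `∫ f log(f/g) dμ ≤ 2ε²`. -/
theorem kl_le_of_ratio_close {X : Type*} [MeasurableSpace X]
    (μ : Measure X) (f g : X → ℝ)
    (hf_meas : Measurable f) (hg_meas : Measurable g)
    (hf_nonneg : ∀ x, 0 ≤ f x) (hg_nonneg : ∀ x, 0 ≤ g x)
    (hf_int : ∫ x, f x ∂μ = 1) (hg_int : ∫ x, g x ∂μ = 1)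
    (hf_pos : ∀ᵐ x ∂μ, 0 < f x)
    (ε : ℝ) (hε0 : 0 ≤ ε) (hε : ε ≤ 1 / 2)
    (hratio : ∀ᵐ x ∂μ, |g x / f x - 1| ≤ ε) :
    ∫ x, f x * Real.log (f x / g x) ∂μ ≤ 2 * ε ^ 2 :=
  kl_le_of_ratio_close_general μ f g hf_int hg_int hf_pos ε hε hratio
end

section
/- Let E be a real Banach space with identity operator id on E. Let J : [0,1] → L(E) be continuous and let R : [0,1] → L(E) be continuous with ‖R(τ)‖ ≤ a for all τ ∈ [0,1], where 0 ≤ a ≤ 1. Suppose J(s) = s·id − ∫₀ˢ (s−τ) R(τ) ∘ J(τ) dτ for all s ∈ [0,1]. Then (i) ‖J(s)‖ ≤ 2s for all s ∈ [0,1], and (ii) ‖J(1) − id‖ ≤ a. -/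
/-!
Bootstrap on linear growth. If `‖J τ‖ ≤ C τ` on `[0,1]`, the Volterra equation gives
`‖J s‖ ≤ s + a C s³/6 ≤ (1 + C/6) s`, an affine contraction of the constant with fixed point `6/5`.
Continuity of `J` on the compact interval provides a first constant, so iterating yields
`‖J s‖ ≤ (6/5) s ≤ 2s`; feeding this back into the equation at `s = 1` gives
`‖J 1 - id‖ ≤ a/5 ≤ a`.
-/

open intervalIntegral

lemma integral_sub_mul_affine (s C D : ℝ) :
    ∫ τ in (0 : ℝ)..s, (s - τ) * (C * τ + D) = C * s ^ 3 / 6 + D * s ^ 2 / 2 := by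
  have hexpand : ∀ τ : ℝ, (s - τ) * (C * τ + D) = s * D + τ * (s * C - D) - τ ^ 2 * C :=
    fun τ => by ring
  simp only [hexpand]
  rw [integral_sub, integral_add]
  · simp only [integral_mul_const, integral_pow, integral_id, integral_const, sub_zero, smul_eq_mul]
    ring
  all_goals exact (by fun_prop : Continuous _).intervalIntegrable _ _

lemma iterate_affine_contraction {P : ℝ → Prop} {c q C₀ : ℝ} (h₀ : P C₀)
    (hstep : ∀ C, P C → P (c + q * (C - c))) (n : ℕ) : P (c + q ^ n * (C₀ - c)) := by
  induction n with
  | zero => simpa using h₀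
  | succ n ih => simpa [pow_succ, mul_comm, mul_left_comm, mul_assoc] using hstep _ ih

lemma le_of_forall_le_add_pow_mul {x c d q : ℝ} (hq0 : 0 ≤ q) (hq1 : q < 1)
    (h : ∀ n : ℕ, x ≤ c + q ^ n * d) : x ≤ c := by
  have hlim : Filter.Tendsto (fun n : ℕ => c + q ^ n * d) Filter.atTop (nhds c) := by
    simpa using (tendsto_pow_atTop_nhds_zero_of_lt_one hq0 hq1).mul_const d |>.const_add c
  exact ge_of_tendsto' hlim h

section Volterra

variable {E : Type*} [NormedAddCommGroup E] [NormedSpace ℝ E] {J R : ℝ → E →L[ℝ] E} {a : ℝ}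

lemma norm_integral_volterra_le {g : ℝ → ℝ} {s : ℝ} (hs : 0 ≤ s)
    (hRa : ∀ τ ∈ Set.Ioc 0 s, ‖R τ‖ ≤ a) (hJg : ∀ τ ∈ Set.Ioc 0 s, ‖J τ‖ ≤ g τ)
    (hg : Continuous g) :
    ‖∫ τ in (0 : ℝ)..s, (s - τ) • (R τ ∘L J τ)‖ ≤ a * ∫ τ in (0 : ℝ)..s, (s - τ) * g τ := by
  rw [← integral_const_mul]
  refine norm_integral_le_of_norm_le hs (Filter.Eventually.of_forall fun τ hτ => ?_)
    ((by fun_prop : Continuous _).intervalIntegrable _ _)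
  have hsτ : 0 ≤ s - τ := sub_nonneg.2 hτ.2
  calc ‖(s - τ) • (R τ ∘L J τ)‖ ≤ (s - τ) * (‖R τ‖ * ‖J τ‖) := by
        rw [norm_smul, Real.norm_of_nonneg hsτ]
        exact mul_le_mul_of_nonneg_left (ContinuousLinearMap.opNorm_comp_le _ _) hsτ
    _ ≤ (s - τ) * (a * g τ) := by
        gcongr
        · exact (norm_nonneg _).trans (hRa τ hτ)
        · exact hRa τ hτ
        · exact hJg τ hτ
    _ = a * ((s - τ) * g τ) := by ring

variable (hRa : ∀ τ ∈ Set.Icc (0 : ℝ) 1, ‖R τ‖ ≤ a)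
  (hvolt : ∀ s ∈ Set.Icc (0 : ℝ) 1,
    J s = s • (ContinuousLinearMap.id ℝ E) - ∫ τ in (0 : ℝ)..s, (s - τ) • (R τ ∘L J τ))
include hRa hvolt

lemma norm_volterra_sub_id_le {C D : ℝ} (hJ : ∀ τ ∈ Set.Icc (0 : ℝ) 1, ‖J τ‖ ≤ C * τ + D)
    {s : ℝ} (hs : s ∈ Set.Icc (0 : ℝ) 1) :
    ‖J s - s • ContinuousLinearMap.id ℝ E‖ ≤ a * (C * s ^ 3 / 6 + D * s ^ 2 / 2) := by
  have hIoc : Set.Ioc 0 s ⊆ Set.Icc 0 1 := fun τ hτ => ⟨hτ.1.le, hτ.2.trans hs.2⟩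
  rw [hvolt s hs, sub_sub_cancel_left, norm_neg, ← integral_sub_mul_affine]
  exact norm_integral_volterra_le hs.1 (fun τ hτ => hRa τ (hIoc hτ)) (fun τ hτ => hJ τ (hIoc hτ))
    (by fun_prop)

lemma norm_volterra_le {C D : ℝ} (hJ : ∀ τ ∈ Set.Icc (0 : ℝ) 1, ‖J τ‖ ≤ C * τ + D)
    {s : ℝ} (hs : s ∈ Set.Icc (0 : ℝ) 1) :
    ‖J s‖ ≤ s + a * (C * s ^ 3 / 6 + D * s ^ 2 / 2) := by
  have hid : ‖s • ContinuousLinearMap.id ℝ E‖ ≤ s := by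
    refine (norm_smul_le s (ContinuousLinearMap.id ℝ E)).trans ?_
    rw [Real.norm_of_nonneg hs.1]
    exact mul_le_of_le_one_right hs.1 ContinuousLinearMap.norm_id_le
  have hsub := norm_volterra_sub_id_le hRa hvolt hJ hs
  linarith [norm_le_insert' (J s) (s • ContinuousLinearMap.id ℝ E)]

lemma norm_volterra_le_six_fifths_mul (hJ : ContinuousOn J (Set.Icc (0 : ℝ) 1)) (ha1 : a ≤ 1) :
    ∀ s ∈ Set.Icc (0 : ℝ) 1, ‖J s‖ ≤ 6 / 5 * s := by
  let LinearBound (C : ℝ) : Prop := 0 ≤ C ∧ ∀ τ ∈ Set.Icc (0 : ℝ) 1, ‖J τ‖ ≤ C * τ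
  obtain ⟨M, hM⟩ := isCompact_Icc.exists_bound_of_continuousOn hJ
  have hM0 : 0 ≤ M := (norm_nonneg _).trans (hM 0 ⟨le_rfl, zero_le_one⟩)
  have base : LinearBound (1 + M) := by
    refine ⟨by linarith, fun s hs => ?_⟩
    have hJs := norm_volterra_le hRa hvolt (C := 0) (D := M) (fun τ hτ => by simpa using hM τ hτ) hs
    have hcorr : a * (M * s ^ 2 / 2) ≤ M * s := by
      have hs2 : s ^ 2 ≤ s := by nlinarith [hs.1, hs.2]
      nlinarith [mul_le_mul_of_nonneg_right ha1 (mul_nonneg hM0 (sq_nonneg s)),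
        mul_le_mul_of_nonneg_left hs2 hM0]
    linarith
  have step (C : ℝ) (hC : LinearBound C) : LinearBound (6 / 5 + 1 / 6 * (C - 6 / 5)) := by
    refine ⟨by linarith [hC.1], fun s hs => ?_⟩
    have hJs := norm_volterra_le hRa hvolt (D := 0) (fun τ hτ => by simpa using hC.2 τ hτ) hs
    have hcorr : a * (C * s ^ 3 / 6) ≤ C * s / 6 := by
      have hs3 : s ^ 3 ≤ s := by nlinarith [hs.1, hs.2, mul_nonneg hs.1 hs.1]
      nlinarith [hC.1, mul_nonneg hC.1 (pow_nonneg hs.1 3)]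
    linarith
  intro s hs
  refine le_of_forall_le_add_pow_mul (q := 1 / 6) (d := (1 + M - 6 / 5) * s)
    (by norm_num) (by norm_num) fun n => ?_
  have hJs := (iterate_affine_contraction base step n).2 s hs
  linarith

end Volterra

theorem jacobi_volterra_bound_general {E : Type*} [NormedAddCommGroup E] [NormedSpace ℝ E]
    (J R : ℝ → E →L[ℝ] E)
    (hJ : ContinuousOn J (Set.Icc (0 : ℝ) 1))
    (a : ℝ) (ha0 : 0 ≤ a) (ha1 : a ≤ 1)
    (hRa : ∀ τ ∈ Set.Icc (0 : ℝ) 1, ‖R τ‖ ≤ a)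
    (hvolt : ∀ s ∈ Set.Icc (0 : ℝ) 1,
      J s = s • (ContinuousLinearMap.id ℝ E) -
        ∫ τ in (0 : ℝ)..s, (s - τ) • (R τ ∘L J τ)) :
    (∀ s ∈ Set.Icc (0 : ℝ) 1, ‖J s‖ ≤ 2 * s) ∧
      ‖J 1 - ContinuousLinearMap.id ℝ E‖ ≤ a := by
  have hlin := norm_volterra_le_six_fifths_mul hRa hvolt hJ ha1
  refine ⟨fun s hs => (hlin s hs).trans (by linarith [hs.1]), ?_⟩
  have h1 := norm_volterra_sub_id_le hRa hvolt (C := 6 / 5) (D := 0)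
    (fun τ hτ => by simpa using hlin τ hτ) ⟨zero_le_one, le_rfl⟩
  rw [one_smul] at h1
  linarith

/-- Quantitative Jacobi-field estimate: if `J(s) = s·id − ∫₀ˢ (s−τ) R(τ) ∘ J(τ) dτ`
with `‖R‖ ≤ a ≤ 1`, then `‖J(s)‖ ≤ 2s` on `[0,1]` and `‖J(1) − id‖ ≤ a`. -/
theorem jacobi_volterra_bound {E : Type*} [NormedAddCommGroup E] [NormedSpace ℝ E]
    [CompleteSpace E]
    (J R : ℝ → E →L[ℝ] E)
    (hJ : ContinuousOn J (Set.Icc (0 : ℝ) 1))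
    (hR : ContinuousOn R (Set.Icc (0 : ℝ) 1))
    (a : ℝ) (ha0 : 0 ≤ a) (ha1 : a ≤ 1)
    (hRa : ∀ τ ∈ Set.Icc (0 : ℝ) 1, ‖R τ‖ ≤ a)
    (hvolt : ∀ s ∈ Set.Icc (0 : ℝ) 1,
      J s = s • (ContinuousLinearMap.id ℝ E) -
        ∫ τ in (0 : ℝ)..s, (s - τ) • (R τ ∘L J τ)) :
    (∀ s ∈ Set.Icc (0 : ℝ) 1, ‖J s‖ ≤ 2 * s) ∧
      ‖J 1 - ContinuousLinearMap.id ℝ E‖ ≤ a :=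
  jacobi_volterra_bound_general J R hJ a ha0 ha1 hRa hvolt
end
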